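/- Let χ : Fin m → Fin n → SignType be a sign pattern and let k ≥ 1. Suppose that for every row i of χ the generalized number of sign changes σ(χ i) is strictly less than k. Then there exists a matrix A : Matrix (Fin m) (Fin n) ℝ such that SignType.sign (A i j) = χ i j for all i, j, and rank A ≤ k. -/

import Mathlib

/-- The number of sign changes of a vector `X`, i.e. the number of consecutive pairs of
entries at which `X` takes different values. -/
noncomputable def signChanges {n : ℕ} (X : Fin n → ℝ) : ℕ :=
  {p : Fin n × Fin n | (p.2 : ℕ) = (p.1 : ℕ) + 1 ∧ X p.1 ≠ X p.2}.ncard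

/-- `X ∈ {1, -1}ⁿ` is a full completion of the sign vector `V` if it agrees with `V` at all
nonzero positions of `V`. -/
def IsFullCompletion {n : ℕ} (V : Fin n → SignType) (X : Fin n → ℝ) : Prop :=
  (∀ j, X j = 1 ∨ X j = -1) ∧ (∀ j, V j = 1 → X j = 1) ∧ (∀ j, V j = -1 → X j = -1)

/-- The generalized number of sign changes of a sign vector `V`: the maximal number of
sign changes of a full completion of `V`. -/
noncomputable def genSignChanges {n : ℕ} (V : Fin n → SignType) : ℕ :=
  sSup {c | ∃ X : Fin n → ℝ, IsFullCompletion V X ∧ signChanges X = c}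

/-!
A row `V` with `σ(V) < k` is the sign vector of the values at `0, …, n - 1` of a real polynomial
of degree at most `σ(V)`, and a matrix of values of polynomials of degree `< k` factors through
their `k` coefficients, so it has rank at most `k`.

To build the polynomial, complete `V` by letting every run of zeros alternate towards the next
nonzero entry, or, for a trailing run, away from the last nonzero entry. Every zero of `V` is then
an end of a sign change of the completion. Put one root in each switching interval `[l, l + 1]`:
at an end where `V` vanishes if there is one, at `l + 1/2` otherwise. The product of the linear
factors, scaled by the last entry of the completion, has the sign of the completion at every
nonzero entry, vanishes at every zero entry, and has degree the number of sign changes.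
-/

open Finset Polynomial

noncomputable def switches (n : ℕ) (s : ℕ → ℝ) : Finset ℕ :=
  {l ∈ range (n - 1) | s l ≠ s (l + 1)}

lemma mem_switches {n : ℕ} {s : ℕ → ℝ} {l : ℕ} :
    l ∈ switches n s ↔ l + 1 < n ∧ s l ≠ s (l + 1) := by
  simp only [switches, mem_filter, mem_range, Nat.lt_sub_iff_add_lt]

lemma signChanges_eq_card_switches (n : ℕ) (s : ℕ → ℝ) :
    signChanges (fun j : Fin n => s j) = #(switches n s) := by
  rw [signChanges, ← Set.ncard_coe_finset]
  refine Set.ncard_congr (fun p _ => (p.1 : ℕ)) ?_ ?_ ?_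
  · rintro ⟨a, b⟩ ⟨hab, hne⟩
    rw [mem_coe, mem_switches, ← hab]
    exact ⟨b.isLt, hne⟩
  · rintro ⟨a, b⟩ ⟨a', b'⟩ ⟨hab, -⟩ ⟨hab', -⟩ h
    simp only at h hab hab'
    ext <;> simp only <;> omega
  · intro l hl
    obtain ⟨hln, hne⟩ := mem_switches.1 hl
    exact ⟨(⟨l, by omega⟩, ⟨l + 1, hln⟩), ⟨rfl, hne⟩, rfl⟩

lemma signChanges_le_genSignChanges {n : ℕ} {V : Fin n → SignType} {X : Fin n → ℝ}
    (hX : IsFullCompletion V X) : signChanges X ≤ genSignChanges V := by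
  refine le_csSup ⟨Nat.card (Fin n × Fin n), ?_⟩ ⟨X, hX, rfl⟩
  rintro _ ⟨-, -, rfl⟩
  exact Set.ncard_le_card _

lemma eq_mul_neg_one_pow_card_switches {s : ℕ → ℝ} (hs : ∀ l, s l = 1 ∨ s l = -1)
    {i j : ℕ} (hij : i ≤ j) : s i = s j * (-1) ^ #{l ∈ Ico i j | s l ≠ s (l + 1)} := by
  induction j, hij using Nat.le_induction with
  | base => simp
  | succ j hij ih =>
    rw [Nat.Ico_succ_right_eq_insert_Ico hij, filter_insert]
    split_ifs with hne
    · have hflip : s (j + 1) = -s j := by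
        rcases hs j with h | h <;> rcases hs (j + 1) with h' | h' <;> simp_all
      rw [card_insert_of_notMem (by simp), pow_succ, ih, hflip]
      ring
    · rw [ih, not_not.1 hne]

lemma sign_sub_eq_ite {j l : ℕ} {r : ℝ} (hr : r ∈ Set.Icc (l : ℝ) (l + 1)) (hj : r ≠ j) :
    SignType.sign ((j : ℝ) - r) = if j ≤ l then -1 else 1 := by
  obtain ⟨hlr, hrl⟩ := hr
  split_ifs with h
  · exact sign_neg (sub_neg.2 (lt_of_le_of_ne ((Nat.cast_le.2 h).trans hlr) hj.symm))
  · have : (l : ℝ) + 1 ≤ j := by exact_mod_cast (by omega : l + 1 ≤ j)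
    exact sign_pos (sub_pos.2 (lt_of_le_of_ne (by linarith) hj))

lemma sign_prod_sub_eq {S : Finset ℕ} {r : ℕ → ℝ} {j : ℕ}
    (hr : ∀ l ∈ S, r l ∈ Set.Icc (l : ℝ) (l + 1)) (hj : ∀ l ∈ S, r l ≠ j) :
    SignType.sign (∏ l ∈ S, ((j : ℝ) - r l)) = (-1) ^ #{l ∈ S | j ≤ l} := by
  rw [← signHom_apply, map_prod]
  simp only [signHom_apply]
  rw [prod_congr rfl fun l hl => sign_sub_eq_ite (hr l hl) (hj l hl), prod_ite, prod_const,
    prod_const_one, mul_one]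

noncomputable def signPoly (n : ℕ) (s r : ℕ → ℝ) : ℝ[X] :=
  C (s (n - 1)) * ∏ l ∈ switches n s, (X - C (r l))

section signPoly

variable {n : ℕ} {s r : ℕ → ℝ}

lemma natDegree_signPoly_le : (signPoly n s r).natDegree ≤ #(switches n s) :=
  (natDegree_C_mul_le _ _).trans <| (natDegree_prod_le _ _).trans (by simp)

lemma eval_signPoly (x : ℝ) :
    (signPoly n s r).eval x = s (n - 1) * ∏ l ∈ switches n s, (x - r l) := by
  simp [signPoly, eval_prod]

lemma eval_signPoly_root {l : ℕ} (hl : l ∈ switches n s) : (signPoly n s r).eval (r l) = 0 := by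
  rw [eval_signPoly, prod_eq_zero hl (sub_self _), mul_zero]

lemma sign_eval_signPoly (hs : ∀ l, s l = 1 ∨ s l = -1)
    (hr : ∀ l ∈ switches n s, r l ∈ Set.Icc (l : ℝ) (l + 1)) {j : ℕ} (hjn : j < n)
    (hj : ∀ l ∈ switches n s, r l ≠ j) :
    SignType.sign ((signPoly n s r).eval (j : ℝ)) = SignType.sign (s j) := by
  have hfilter : {l ∈ switches n s | j ≤ l} = {l ∈ Ico j (n - 1) | s l ≠ s (l + 1)} := by
    ext l
    simp only [mem_filter, mem_switches, mem_Ico]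
    constructor
    · rintro ⟨⟨hl, hne⟩, hjl⟩
      exact ⟨⟨hjl, by omega⟩, hne⟩
    · rintro ⟨⟨hjl, hl⟩, hne⟩
      exact ⟨⟨by omega, hne⟩, hjl⟩
  rw [eval_signPoly, sign_mul, sign_prod_sub_eq hr hj, hfilter,
    eq_mul_neg_one_pow_card_switches hs (i := j) (by omega : j ≤ n - 1), sign_mul, sign_pow]
  simp

end signPoly

namespace SignVector

variable (n : ℕ) (W : ℕ → SignType)

def nonzeros : Finset ℕ := {t ∈ range n | W t ≠ 0}

def nonzerosFrom (j : ℕ) : Finset ℕ := {t ∈ nonzeros n W | j ≤ t}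

def anchor (j : ℕ) : ℕ :=
  if h : (nonzerosFrom n W j).Nonempty then (nonzerosFrom n W j).min' h
  else if h' : (nonzeros n W).Nonempty then (nonzeros n W).max' h' else 0

noncomputable def completion (j : ℕ) : ℝ :=
  (-1) ^ (j + anchor n W j) * W (anchor n W j)

noncomputable def root (l : ℕ) : ℝ :=
  if l ∉ nonzeros n W ∧ (nonzerosFrom n W l).Nonempty then l
  else if l + 1 ∉ nonzeros n W then (l : ℝ) + 1 else (l : ℝ) + 1 / 2

variable {n W}

lemma mem_nonzeros {t : ℕ} : t ∈ nonzeros n W ↔ t < n ∧ W t ≠ 0 := by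
  simp [nonzeros]

lemma mem_nonzerosFrom {j t : ℕ} : t ∈ nonzerosFrom n W j ↔ t ∈ nonzeros n W ∧ j ≤ t :=
  mem_filter

lemma nonzerosFrom_succ {l : ℕ} (hl : l ∉ nonzeros n W) :
    nonzerosFrom n W (l + 1) = nonzerosFrom n W l := by
  ext t
  simp only [mem_nonzerosFrom]
  constructor
  · rintro ⟨ht, hlt⟩
    exact ⟨ht, by omega⟩
  · rintro ⟨ht, hlt⟩
    exact ⟨ht, lt_of_le_of_ne hlt (by rintro rfl; exact hl ht)⟩

lemma anchor_mem (hN : (nonzeros n W).Nonempty) (j : ℕ) : anchor n W j ∈ nonzeros n W := by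
  unfold anchor
  split_ifs with h
  · exact (mem_nonzerosFrom.1 (min'_mem _ h)).1
  · exact max'_mem _ hN

lemma anchor_eq_self {j : ℕ} (hj : j ∈ nonzeros n W) : anchor n W j = j := by
  have hjj : j ∈ nonzerosFrom n W j := mem_nonzerosFrom.2 ⟨hj, le_rfl⟩
  have hne : (nonzerosFrom n W j).Nonempty := ⟨j, hjj⟩
  rw [anchor, dif_pos hne, min'_eq_iff]
  exact ⟨hjj, fun t ht => (mem_nonzerosFrom.1 ht).2⟩

lemma anchor_succ_of_notMem {l : ℕ} (hl : l ∉ nonzeros n W) :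
    anchor n W (l + 1) = anchor n W l := by
  simp only [anchor, nonzerosFrom_succ hl]

lemma anchor_succ_of_not_nonempty (hN : (nonzeros n W).Nonempty) {l : ℕ}
    (h : ¬(nonzerosFrom n W (l + 1)).Nonempty) : anchor n W (l + 1) = anchor n W l := by
  by_cases hl : l ∈ nonzeros n W
  · rw [anchor_eq_self hl, anchor, dif_neg h, dif_pos hN, max'_eq_iff]
    refine ⟨hl, fun t ht => ?_⟩
    by_contra! hlt
    exact h ⟨t, mem_nonzerosFrom.2 ⟨ht, hlt⟩⟩
  · exact anchor_succ_of_notMem hl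

lemma completion_eq_one_or (hN : (nonzeros n W).Nonempty) (j : ℕ) :
    completion n W j = 1 ∨ completion n W j = -1 := by
  have hW := (mem_nonzeros.1 (anchor_mem hN j)).2
  rw [completion]
  generalize W (anchor n W j) = a at hW
  rcases neg_one_pow_eq_or ℝ (j + anchor n W j) with h | h <;> cases a <;> simp_all

lemma completion_of_mem {j : ℕ} (hj : j ∈ nonzeros n W) : completion n W j = W j := by
  rw [completion, anchor_eq_self hj, Even.neg_one_pow ⟨j, rfl⟩, one_mul]

lemma completion_succ {l : ℕ} (h : anchor n W (l + 1) = anchor n W l) :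
    completion n W (l + 1) = -completion n W l := by
  rw [completion, completion, h, add_right_comm, pow_succ]
  ring

lemma mem_switches_completion (hN : (nonzeros n W).Nonempty) {l : ℕ} (hl : l + 1 < n)
    (h : anchor n W (l + 1) = anchor n W l) : l ∈ switches n (completion n W) := by
  refine mem_switches.2 ⟨hl, ?_⟩
  rw [completion_succ h]
  rcases completion_eq_one_or hN l with h | h <;> rw [h] <;> norm_num

lemma isFullCompletion_completion (hN : (nonzeros n W).Nonempty) {V : Fin n → SignType}
    (hV : ∀ j : Fin n, W j = V j) : IsFullCompletion V (fun j : Fin n => completion n W j) := by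
  refine ⟨fun j => completion_eq_one_or hN j, fun j hj => ?_, fun j hj => ?_⟩ <;> dsimp only <;>
    rw [completion_of_mem (mem_nonzeros.2 ⟨j.isLt, by simp [hV, hj]⟩), hV, hj] <;> simp

lemma root_mem_Icc (l : ℕ) : root n W l ∈ Set.Icc (l : ℝ) (l + 1) := by
  unfold root
  split_ifs <;> constructor <;> linarith

lemma root_ne_of_mem {j : ℕ} (hj : j ∈ nonzeros n W) (l : ℕ) : root n W l ≠ j := by
  unfold root
  split_ifs with h₁ h₂
  · exact_mod_cast fun h : l = j => h₁.1 (h ▸ hj)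
  · intro h
    have : 2 * l + 1 = 2 * j := by exact_mod_cast (by linarith : (2 * l + 1 : ℝ) = 2 * j)
    omega
  · exact_mod_cast fun h : l + 1 = j => h₂ (h ▸ hj)

/-- Every zero of `W` is the root of an adjacent switch of the completion: of the switch to its
right if a nonzero entry follows it, of the switch to its left otherwise. -/
lemma exists_root_eq (hN : (nonzeros n W).Nonempty) {j : ℕ} (hjn : j < n)
    (hj : j ∉ nonzeros n W) : ∃ l ∈ switches n (completion n W), root n W l = j := by
  by_cases hR : (nonzerosFrom n W j).Nonempty
  · obtain ⟨t, ht⟩ := id hR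
    obtain ⟨ht, hjt⟩ := mem_nonzerosFrom.1 ht
    have htn := (mem_nonzeros.1 ht).1
    have hjt' : j ≠ t := by rintro rfl; exact hj ht
    refine ⟨j, mem_switches_completion hN (by omega) (anchor_succ_of_notMem hj), ?_⟩
    rw [root, if_pos ⟨hj, hR⟩]
  · obtain ⟨t, ht⟩ := id hN
    have htj : t < j := by
      by_contra! h
      exact hR ⟨t, mem_nonzerosFrom.2 ⟨ht, h⟩⟩
    obtain ⟨l, rfl⟩ : ∃ l, j = l + 1 := ⟨j - 1, by omega⟩
    refine ⟨l, mem_switches_completion hN hjn (anchor_succ_of_not_nonempty hN hR), ?_⟩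
    have hl : ¬(l ∉ nonzeros n W ∧ (nonzerosFrom n W l).Nonempty) :=
      fun h => hR (nonzerosFrom_succ h.1 ▸ h.2)
    rw [root, if_neg hl, if_pos hj, Nat.cast_succ]

lemma sign_eval_signPoly_completion (hN : (nonzeros n W).Nonempty) {j : ℕ} (hjn : j < n) :
    SignType.sign ((signPoly n (completion n W) (root n W)).eval (j : ℝ)) = W j := by
  by_cases hj : j ∈ nonzeros n W
  · rw [sign_eval_signPoly (completion_eq_one_or hN) (fun l _ => root_mem_Icc l) hjn
      (fun l _ => root_ne_of_mem hj l), completion_of_mem hj]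
    cases W j <;> simp
  · obtain ⟨l, hl, hlj⟩ := exists_root_eq hN hjn hj
    rw [← hlj, eval_signPoly_root hl, sign_zero]
    exact (not_not.1 fun h => hj (mem_nonzeros.2 ⟨hjn, h⟩)).symm

end SignVector

open SignVector in
theorem exists_polynomial_sign_eq {n : ℕ} (V : Fin n → SignType) :
    ∃ p : ℝ[X], p.natDegree ≤ genSignChanges V ∧
      ∀ j : Fin n, SignType.sign (p.eval ((j : ℕ) : ℝ)) = V j := by
  set W : ℕ → SignType := fun t => if h : t < n then V ⟨t, h⟩ else 0
  have hW : ∀ j : Fin n, W j = V j := fun j => dif_pos j.isLt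
  by_cases hN : (nonzeros n W).Nonempty
  · refine ⟨signPoly n (completion n W) (root n W), ?_,
      fun j => by rw [sign_eval_signPoly_completion hN j.isLt, hW]⟩
    calc _ ≤ #(switches n (completion n W)) := natDegree_signPoly_le
      _ = signChanges (fun j : Fin n => completion n W j) :=
        (signChanges_eq_card_switches n _).symm
      _ ≤ genSignChanges V := signChanges_le_genSignChanges (isFullCompletion_completion hN hW)
  · refine ⟨0, by simp, fun j => ?_⟩
    rw [eval_zero, sign_zero, ← hW]
    by_contra h
    exact hN ⟨j, mem_nonzeros.2 ⟨j.isLt, Ne.symm h⟩⟩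

theorem Matrix.rank_of_eval_le {R ι κ : Type*} [CommSemiring R] [StrongRankCondition R]
    [Fintype κ] {k : ℕ} (p : ι → R[X]) (x : κ → R) (hp : ∀ i, (p i).natDegree < k) :
    (Matrix.of fun i j => (p i).eval (x j)).rank ≤ k := by
  have hfac : (Matrix.of fun i j => (p i).eval (x j)) =
      (Matrix.of fun i (d : Fin k) => (p i).coeff d) *
        Matrix.of fun (d : Fin k) j => x j ^ (d : ℕ) := by
    ext i j
    simp only [Matrix.mul_apply, Matrix.of_apply, eval_eq_sum_range' (hp i),
      Fin.sum_univ_eq_sum_range (fun d => (p i).coeff d * x j ^ d)]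
  rw [hfac]
  exact (Matrix.rank_mul_le_left _ _).trans
    ((Matrix.rank_le_card_width _).trans_eq (Fintype.card_fin k))

theorem sign_pattern_low_rank_lift_general
    (m n k : ℕ) (χ : Fin m → Fin n → SignType)
    (hrow : ∀ i, genSignChanges (χ i) < k) :
    ∃ A : Matrix (Fin m) (Fin n) ℝ,
      (∀ i j, SignType.sign (A i j) = χ i j) ∧ A.rank ≤ k := by
  choose p hdeg hsign using fun i => exists_polynomial_sign_eq (χ i)
  exact ⟨Matrix.of fun i j => (p i).eval ((j : ℕ) : ℝ), hsign,
    Matrix.rank_of_eval_le p _ fun i => (hdeg i).trans_lt (hrow i)⟩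

/-- If every row of the sign pattern `χ` has generalized number of sign changes less than
`k ≥ 1`, then there is a real matrix with sign pattern `χ` and rank at most `k`. -/
theorem sign_pattern_low_rank_lift
    (m n k : ℕ) (hk : 1 ≤ k) (χ : Fin m → Fin n → SignType)
    (hrow : ∀ i, genSignChanges (χ i) < k) :
    ∃ A : Matrix (Fin m) (Fin n) ℝ,
      (∀ i j, SignType.sign (A i j) = χ i j) ∧ A.rank ≤ k :=
  sign_pattern_low_rank_lift_general m n k χ hrow
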